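/- Let i, j ∈ {1,…,m} and suppose σ̃_{i,m}, σ̃_{j,m} > 0. Then |⟨ṽ_{j,m}, ṽ_{i,m}⟩_{L²(0,1)} − δ_{ij}| ≤ C_K²/(6·σ̃_{j,m}·σ̃_{i,m}·m²), where δ_{ij} is the Kronecker delta. -/

import Mathlib

open Real MeasureTheory

/-- The unit interval `[0,1]`. -/
def I01 : Set ℝ := Set.Icc 0 1

/-- `κ : [0,1]² → ℝ` is twice continuously differentiable, with partial derivatives
`κ10 = ∂ₓκ`, `κ01 = ∂ᵧκ`, `κ20 = ∂ₓ²κ`, `κ11 = ∂ₓ∂ᵧκ`, `κ02 = ∂ᵧ²κ`, and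
`CK` bounds the absolute values of `κ` and all its partial derivatives of order `≤ 2`
on `[0,1]²` (in the paper, `CK` is the supremum of these quantities). -/
def IsC2KernelWith (κ κ10 κ01 κ20 κ11 κ02 : ℝ → ℝ → ℝ) (CK : ℝ) : Prop :=
  (∀ x ∈ I01, ∀ y ∈ I01, HasDerivWithinAt (fun x' => κ x' y) (κ10 x y) I01 x) ∧
  (∀ x ∈ I01, ∀ y ∈ I01, HasDerivWithinAt (fun y' => κ x y') (κ01 x y) I01 y) ∧
  (∀ x ∈ I01, ∀ y ∈ I01, HasDerivWithinAt (fun x' => κ10 x' y) (κ20 x y) I01 x) ∧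
  (∀ x ∈ I01, ∀ y ∈ I01, HasDerivWithinAt (fun y' => κ10 x y') (κ11 x y) I01 y) ∧
  (∀ x ∈ I01, ∀ y ∈ I01, HasDerivWithinAt (fun y' => κ01 x y') (κ02 x y) I01 y) ∧
  ContinuousOn (fun p : ℝ × ℝ => κ p.1 p.2) (I01 ×ˢ I01) ∧
  ContinuousOn (fun p : ℝ × ℝ => κ10 p.1 p.2) (I01 ×ˢ I01) ∧
  ContinuousOn (fun p : ℝ × ℝ => κ01 p.1 p.2) (I01 ×ˢ I01) ∧
  ContinuousOn (fun p : ℝ × ℝ => κ20 p.1 p.2) (I01 ×ˢ I01) ∧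
  ContinuousOn (fun p : ℝ × ℝ => κ11 p.1 p.2) (I01 ×ˢ I01) ∧
  ContinuousOn (fun p : ℝ × ℝ => κ02 p.1 p.2) (I01 ×ˢ I01) ∧
  (∀ x ∈ I01, ∀ y ∈ I01,
    |κ x y| ≤ CK ∧ |κ10 x y| ≤ CK ∧ |κ01 x y| ≤ CK ∧
    |κ20 x y| ≤ CK ∧ |κ11 x y| ≤ CK ∧ |κ02 x y| ≤ CK)

/-- The midpoint grid points `ξ_{l,m} = (2l−1)/(2m)`. -/
noncomputable def gridPt (m l : ℕ) : ℝ := (2 * (l : ℝ) - 1) / (2 * (m : ℝ))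

/-!
Write `u_p := Σ_l (w̃_p)_l κ(ξ_l, ·)`, so that `⟨ṽ_j, ṽ_i⟩ = (σ̃_j σ̃_i m)⁻¹ ∫₀¹ u_j u_i`.
The composite midpoint rule on the grid `ξ` replaces this integral by
`m⁻¹ Σ_k u_j(ξ_k) u_i(ξ_k)`, and since `u_p(ξ_k) = m σ̃_p (z̃_p)_k` by the singular-value
relation, orthonormality of the `z̃` makes that quadrature sum exactly `σ̃_j σ̃_i m δ_ij`.
The midpoint rule errs by at most `sup |(u_j u_i)''| / (24 m²)`, and Cauchy–Schwarz gives
`Σ_l |(w̃_p)_l| ≤ √m`, so `u_p, u_p', u_p''` are bounded by `C_K √m` and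
`|(u_j u_i)''| ≤ 4 C_K² m`.
-/

open Set

section MidpointRule

variable {f f' f'' : ℝ → ℝ} {c h M : ℝ}

lemma ContinuousOn.comp_const_add_Icc (hf : ContinuousOn f (Icc (c - h) (c + h))) :
    ContinuousOn (fun t => f (c + t)) (Icc 0 h) :=
  hf.comp (by fun_prop) fun _ ht => ⟨by linarith [ht.1, ht.2], by linarith [ht.2]⟩

lemma ContinuousOn.comp_const_sub_Icc (hf : ContinuousOn f (Icc (c - h) (c + h))) :
    ContinuousOn (fun t => f (c - t)) (Icc 0 h) :=
  hf.comp (by fun_prop) fun _ ht => ⟨by linarith [ht.2], by linarith [ht.1, ht.2]⟩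

lemma integral_sub_two_mul_midpoint_eq (hf : ContinuousOn f (Icc (c - h) (c + h)))
    (hh : 0 ≤ h) :
    (∫ x in c - h..c + h, f x) - 2 * h * f c =
      ∫ t in (0 : ℝ)..h, (f (c + t) + f (c - t) - 2 * f c) := by
  have hplus := hf.comp_const_add_Icc.intervalIntegrable_of_Icc (μ := volume) hh
  have hminus := hf.comp_const_sub_Icc.intervalIntegrable_of_Icc (μ := volume) hh
  have hhalf : ∀ a b, a ∈ Icc (c - h) (c + h) → b ∈ Icc (c - h) (c + h) →
      IntervalIntegrable f volume a b := fun a b ha hb =>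
    (hf.mono (uIcc_subset_Icc ha hb)).intervalIntegrable
  have hc : c ∈ Icc (c - h) (c + h) := ⟨by linarith, by linarith⟩
  rw [intervalIntegral.integral_sub (μ := volume) (hplus.add hminus) intervalIntegrable_const,
    intervalIntegral.integral_add hplus hminus, intervalIntegral.integral_comp_add_left,
    intervalIntegral.integral_comp_sub_left, add_zero, sub_zero, add_comm (∫ x in c..c + h, f x),
    intervalIntegral.integral_add_adjacent_intervals (hhalf _ _ (left_mem_Icc.2 (by linarith)) hc)
      (hhalf _ _ hc (right_mem_Icc.2 (by linarith)))]
  simp only [intervalIntegral.integral_const, sub_zero, smul_eq_mul]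
  ring

-- `s ↦ f (c + s) + f (c - s)` has derivative `f' (c + s) - f' (c - s)`, which the mean value
-- theorem bounds by `2 M s`; integrating from `0` to `h` gives `M h²`.
lemma abs_add_sub_two_mul_le
    (hf : ∀ x ∈ Icc (c - h) (c + h), HasDerivWithinAt f (f' x) (Icc (c - h) (c + h)) x)
    (hf' : ∀ x ∈ Icc (c - h) (c + h), HasDerivWithinAt f' (f'' x) (Icc (c - h) (c + h)) x)
    (hM : ∀ x ∈ Icc (c - h) (c + h), |f'' x| ≤ M) (hh : 0 ≤ h) :
    |f (c + h) + f (c - h) - 2 * f c| ≤ M * h ^ 2 := by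
  have hcont : ContinuousOn f (Icc (c - h) (c + h)) := fun x hx => (hf x hx).continuousWithinAt
  have hcont' : ContinuousOn f' (Icc (c - h) (c + h)) := fun x hx =>
    (hf' x hx).continuousWithinAt
  have hderiv : ∀ x ∈ Ioo (c - h) (c + h), HasDerivAt f (f' x) x := fun x hx =>
    (hf x (Ioo_subset_Icc_self hx)).hasDerivAt (Icc_mem_nhds hx.1 hx.2)
  have hslope : ∀ s ∈ Icc 0 h, ‖f' (c + s) - f' (c - s)‖ ≤ 2 * M * s := by
    intro s hs
    have := (convex_Icc (c - h) (c + h)).norm_image_sub_le_of_norm_hasDerivWithin_le hf' hM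
      (x := c - s) (y := c + s) ⟨by linarith [hs.2], by linarith [hs.1]⟩
      ⟨by linarith [hs.1], by linarith [hs.2]⟩
    rwa [show c + s - (c - s) = 2 * s by ring, Real.norm_eq_abs (2 * s),
      abs_of_nonneg (by linarith [hs.1]), ← mul_assoc, mul_comm M] at this
  have hderiv_sum : ∀ s ∈ Ioo 0 h, HasDerivAt (fun s => f (c + s) + f (c - s) - 2 * f c)
      (f' (c + s) - f' (c - s)) s := by
    intro s hs
    have hplus := (hderiv (c + s) ⟨by linarith [hs.1], by linarith [hs.2]⟩).comp_const_add c s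
    have hminus := (hderiv (c - s) ⟨by linarith [hs.2], by linarith [hs.1]⟩).comp_const_sub c s
    exact ((hplus.add hminus).sub_const _).congr_deriv (by ring)
  have hFTC :
      ∫ s in (0 : ℝ)..h, (f' (c + s) - f' (c - s)) = f (c + h) + f (c - h) - 2 * f c := by
    rw [intervalIntegral.integral_eq_sub_of_hasDerivAt_of_le hh (f := fun s =>
      f (c + s) + f (c - s) - 2 * f c)
      ((hcont.comp_const_add_Icc.add hcont.comp_const_sub_Icc).sub continuousOn_const) hderiv_sum
      ((hcont'.comp_const_add_Icc.sub hcont'.comp_const_sub_Icc).intervalIntegrable_of_Icc hh)]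
    simp only [add_zero, sub_zero]
    ring
  have := intervalIntegral.norm_integral_le_of_norm_le (μ := volume) (g := fun s => 2 * M * s)
    hh    (Filter.Eventually.of_forall fun s hs => hslope s (Ioc_subset_Icc_self hs))
    (Continuous.intervalIntegrable (by fun_prop) _ _)
  rw [hFTC, intervalIntegral.integral_const_mul, integral_id] at this
  simpa [field] using this

theorem abs_integral_sub_two_mul_midpoint_le
    (hf : ∀ x ∈ Icc (c - h) (c + h), HasDerivWithinAt f (f' x) (Icc (c - h) (c + h)) x)
    (hf' : ∀ x ∈ Icc (c - h) (c + h), HasDerivWithinAt f' (f'' x) (Icc (c - h) (c + h)) x)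
    (hM : ∀ x ∈ Icc (c - h) (c + h), |f'' x| ≤ M) (hh : 0 ≤ h) :
    |(∫ x in c - h..c + h, f x) - 2 * h * f c| ≤ M * h ^ 3 / 3 := by
  have hsecond : ∀ t ∈ Icc 0 h, ‖f (c + t) + f (c - t) - 2 * f c‖ ≤ M * t ^ 2 := by
    intro t ht
    have hsub : Icc (c - t) (c + t) ⊆ Icc (c - h) (c + h) :=
      Icc_subset_Icc (by linarith [ht.2]) (by linarith [ht.2])
    exact abs_add_sub_two_mul_le (fun x hx => (hf x (hsub hx)).mono hsub)
      (fun x hx => (hf' x (hsub hx)).mono hsub) (fun x hx => hM x (hsub hx)) ht.1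
  have := intervalIntegral.norm_integral_le_of_norm_le (μ := volume) (g := fun t => M * t ^ 2)
    hh    (Filter.Eventually.of_forall fun t ht => hsecond t (Ioc_subset_Icc_self ht))
    (Continuous.intervalIntegrable (by fun_prop) _ _)
  rw [← integral_sub_two_mul_midpoint_eq (fun x hx => (hf x hx).continuousWithinAt) hh,
    intervalIntegral.integral_const_mul, integral_pow] at this
  norm_num at this
  linarith

end MidpointRule

lemma gridPt_mem_I01 {m l : ℕ} (hl : l ∈ Finset.Icc 1 m) : gridPt m l ∈ I01 := by
  obtain ⟨hl1, hlm⟩ := Finset.mem_Icc.1 hl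
  have hl1' : (1 : ℝ) ≤ l := by exact_mod_cast hl1
  have hlm' : (l : ℝ) ≤ m := by exact_mod_cast hlm
  exact ⟨div_nonneg (by linarith) (by linarith),
    div_le_one_of_le₀ (by linarith) (by linarith)⟩

lemma gridPt_add_one_sub (m k : ℕ) : gridPt m (k + 1) - 1 / (2 * m) = k / m := by
  rw [gridPt]; push_cast; ring

lemma gridPt_add_one_add (m k : ℕ) : gridPt m (k + 1) + 1 / (2 * m) = (k + 1 : ℕ) / m := by
  rw [gridPt]; push_cast; ring

theorem abs_integral_sub_midpoint_sum_le {f f' f'' : ℝ → ℝ} {M : ℝ} {m : ℕ}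
    (hf : ∀ x ∈ Icc (0 : ℝ) 1, HasDerivWithinAt f (f' x) (Icc 0 1) x)
    (hf' : ∀ x ∈ Icc (0 : ℝ) 1, HasDerivWithinAt f' (f'' x) (Icc 0 1) x)
    (hM : ∀ x ∈ Icc (0 : ℝ) 1, |f'' x| ≤ M) (hm : 0 < m) :
    |(∫ x in (0 : ℝ)..1, f x) - (∑ k ∈ Finset.Icc 1 m, f (gridPt m k)) / m| ≤
      M / (24 * m ^ 2) := by
  have hm' : (0 : ℝ) < m := Nat.cast_pos.2 hm
  have hcell : ∀ k < m, Icc (k / m : ℝ) ((k + 1 : ℕ) / m) ⊆ Icc 0 1 := fun k hk =>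
    Icc_subset_Icc (by positivity) (div_le_one_of_le₀ (by exact_mod_cast hk) hm'.le)
  have hcell_err : ∀ k < m,
      |(∫ x in (k / m : ℝ)..((k + 1 : ℕ) / m), f x) - f (gridPt m (k + 1)) / m| ≤
        M / (24 * m ^ 3) := by
    intro k hk
    have hsub := hcell k hk
    rw [← gridPt_add_one_sub, ← gridPt_add_one_add] at hsub ⊢
    have := abs_integral_sub_two_mul_midpoint_le (fun x hx => (hf x (hsub hx)).mono hsub)
      (fun x hx => (hf' x (hsub hx)).mono hsub) (fun x hx => hM x (hsub hx))
      (by positivity : (0 : ℝ) ≤ 1 / (2 * m))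
    have hweight : 2 * (1 / (2 * m)) * f (gridPt m (k + 1)) = f (gridPt m (k + 1)) / m := by
      field_simp
    have hbound : M * (1 / (2 * m : ℝ)) ^ 3 / 3 = M / (24 * m ^ 3) := by
      field_simp; ring
    rwa [hweight, hbound] at this
  have hintegral : ∑ k ∈ Finset.range m, ∫ x in (k / m : ℝ)..((k + 1 : ℕ) / m), f x =
      ∫ x in (0 : ℝ)..1, f x := by
    have hcont : ContinuousOn f (Icc 0 1) := fun x hx => (hf x hx).continuousWithinAt
    rw [intervalIntegral.sum_integral_adjacent_intervals fun k hk =>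
      (hcont.mono (hcell k hk)).intervalIntegrable_of_Icc (by gcongr; simp)]
    simp [hm'.ne']
  have hnodes : ∑ k ∈ Finset.Icc 1 m, f (gridPt m k) =
      ∑ k ∈ Finset.range m, f (gridPt m (k + 1)) := by
    rw [← Finset.Ico_add_one_right_eq_Icc, Finset.sum_Ico_eq_sum_range]
    simp [add_comm]
  calc _ = |∑ k ∈ Finset.range m,
        ((∫ x in (k / m : ℝ)..((k + 1 : ℕ) / m), f x) - f (gridPt m (k + 1)) / m)| := by
        rw [Finset.sum_sub_distrib, hintegral, hnodes, Finset.sum_div]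
    _ ≤ ∑ k ∈ Finset.range m, M / (24 * m ^ 3) :=
        (Finset.abs_sum_le_sum_abs _ _).trans
          (Finset.sum_le_sum fun k hk => hcell_err k (Finset.mem_range.1 hk))
    _ = M / (24 * m ^ 2) := by
        rw [Finset.sum_const, Finset.card_range, nsmul_eq_mul]; field_simp

lemma abs_mul_le_of_abs_le {a b A B : ℝ} (ha : |a| ≤ A) (hb : |b| ≤ B) :
    |a * b| ≤ A * B := by
  rw [abs_mul]
  exact mul_le_mul ha hb (abs_nonneg _) ((abs_nonneg _).trans ha)

lemma Finset.abs_sum_mul_le {ι : Type*} (t : Finset ι) (a g : ι → ℝ) {A : ℝ}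
    (hg : ∀ l ∈ t, |g l| ≤ A) : |∑ l ∈ t, a l * g l| ≤ A * ∑ l ∈ t, |a l| := by
  rw [Finset.mul_sum]
  refine (Finset.abs_sum_le_sum_abs _ _).trans (Finset.sum_le_sum fun l hl => ?_)
  rw [abs_mul, mul_comm A]
  exact mul_le_mul_of_nonneg_left (hg l hl) (abs_nonneg _)

lemma Finset.sum_abs_le_sqrt_card {ι : Type*} (t : Finset ι) (a : ι → ℝ)
    (ha : ∑ l ∈ t, a l ^ 2 = 1) : ∑ l ∈ t, |a l| ≤ √(t.card : ℝ) := by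
  apply Real.le_sqrt_of_sq_le
  simpa [ha] using sq_sum_le_card_mul_sum_sq (s := t) (f := fun l => |a l|)

structure HasDerivTwiceBoundedOn (f f' f'' : ℝ → ℝ) (s : Set ℝ) (A : ℝ) : Prop where
  hasDerivWithinAt : ∀ x ∈ s, HasDerivWithinAt f (f' x) s x
  hasDerivWithinAt_deriv : ∀ x ∈ s, HasDerivWithinAt f' (f'' x) s x
  abs_le : ∀ x ∈ s, |f x| ≤ A
  abs_deriv_le : ∀ x ∈ s, |f' x| ≤ A
  abs_deriv2_le : ∀ x ∈ s, |f'' x| ≤ A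

namespace HasDerivTwiceBoundedOn

variable {f f' f'' g g' g'' : ℝ → ℝ} {s : Set ℝ} {A B : ℝ}

lemma mono_bound (h : HasDerivTwiceBoundedOn f f' f'' s A) (hAB : A ≤ B) :
    HasDerivTwiceBoundedOn f f' f'' s B where
  hasDerivWithinAt := h.hasDerivWithinAt
  hasDerivWithinAt_deriv := h.hasDerivWithinAt_deriv
  abs_le x hx := (h.abs_le x hx).trans hAB
  abs_deriv_le x hx := (h.abs_deriv_le x hx).trans hAB
  abs_deriv2_le x hx := (h.abs_deriv2_le x hx).trans hAB

lemma sum_mul {ι : Type*} (t : Finset ι) (a : ι → ℝ) {f f' f'' : ι → ℝ → ℝ}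
    (h : ∀ l ∈ t, HasDerivTwiceBoundedOn (f l) (f' l) (f'' l) s A) :
    HasDerivTwiceBoundedOn (fun x => ∑ l ∈ t, a l * f l x) (fun x => ∑ l ∈ t, a l * f' l x)
      (fun x => ∑ l ∈ t, a l * f'' l x) s (A * ∑ l ∈ t, |a l|) where
  hasDerivWithinAt x hx :=
    HasDerivWithinAt.fun_sum fun l hl => ((h l hl).hasDerivWithinAt x hx).const_mul (a l)
  hasDerivWithinAt_deriv x hx :=
    HasDerivWithinAt.fun_sum fun l hl => ((h l hl).hasDerivWithinAt_deriv x hx).const_mul (a l)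
  abs_le x hx := t.abs_sum_mul_le a _ fun l hl => (h l hl).abs_le x hx
  abs_deriv_le x hx := t.abs_sum_mul_le a _ fun l hl => (h l hl).abs_deriv_le x hx
  abs_deriv2_le x hx := t.abs_sum_mul_le a _ fun l hl => (h l hl).abs_deriv2_le x hx

lemma mul (hf : HasDerivTwiceBoundedOn f f' f'' s A)
    (hg : HasDerivTwiceBoundedOn g g' g'' s B) :
    HasDerivTwiceBoundedOn (fun x => f x * g x) (fun x => f' x * g x + f x * g' x)
      (fun x => f'' x * g x + f' x * g' x + (f' x * g' x + f x * g'' x)) s (4 * (A * B)) := by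
  have hAB : ∀ x ∈ s, 0 ≤ A * B := fun x hx =>
    mul_nonneg ((abs_nonneg _).trans (hf.abs_le x hx)) ((abs_nonneg _).trans (hg.abs_le x hx))
  refine ⟨fun x hx => (hf.hasDerivWithinAt x hx).mul (hg.hasDerivWithinAt x hx),
    fun x hx => ((hf.hasDerivWithinAt_deriv x hx).mul (hg.hasDerivWithinAt x hx)).add
      ((hf.hasDerivWithinAt x hx).mul (hg.hasDerivWithinAt_deriv x hx)),
    fun x hx => ?_, fun x hx => ?_, fun x hx => ?_⟩
  · linarith [abs_mul_le_of_abs_le (hf.abs_le x hx) (hg.abs_le x hx), hAB x hx]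
  · have := abs_mul_le_of_abs_le (hf.abs_deriv_le x hx) (hg.abs_le x hx)
    have := abs_mul_le_of_abs_le (hf.abs_le x hx) (hg.abs_deriv_le x hx)
    linarith [abs_add_le (f' x * g x) (f x * g' x), hAB x hx]
  · have := abs_mul_le_of_abs_le (hf.abs_deriv2_le x hx) (hg.abs_le x hx)
    have := abs_mul_le_of_abs_le (hf.abs_deriv_le x hx) (hg.abs_deriv_le x hx)
    have := abs_mul_le_of_abs_le (hf.abs_le x hx) (hg.abs_deriv2_le x hx)
    linarith [abs_add_le (f'' x * g x + f' x * g' x) (f' x * g' x + f x * g'' x),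
      abs_add_le (f'' x * g x) (f' x * g' x), abs_add_le (f' x * g' x) (f x * g'' x)]

end HasDerivTwiceBoundedOn

noncomputable def kernelCombination (κ : ℝ → ℝ → ℝ) (m : ℕ) (a : ℕ → ℝ) (x : ℝ) : ℝ :=
  ∑ l ∈ Finset.Icc 1 m, a l * κ (gridPt m l) x

section KernelCombination

variable {κ κ10 κ01 κ20 κ11 κ02 : ℝ → ℝ → ℝ} {CK : ℝ} {m : ℕ} {a : ℕ → ℝ}

lemma IsC2KernelWith.hasDerivTwiceBoundedOn_section {y : ℝ}
    (hker : IsC2KernelWith κ κ10 κ01 κ20 κ11 κ02 CK) (hy : y ∈ I01) :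
    HasDerivTwiceBoundedOn (κ y) (κ01 y) (κ02 y) I01 CK := by
  obtain ⟨-, hd01, -, -, hd02, -, -, -, -, -, -, hbound⟩ := hker
  exact ⟨hd01 y hy, hd02 y hy, fun x hx => (hbound y hy x hx).1,
    fun x hx => (hbound y hy x hx).2.2.1, fun x hx => (hbound y hy x hx).2.2.2.2.2⟩

lemma IsC2KernelWith.hasDerivTwiceBoundedOn_kernelCombination
    (hker : IsC2KernelWith κ κ10 κ01 κ20 κ11 κ02 CK)
    (ha : ∑ l ∈ Finset.Icc 1 m, a l ^ 2 = 1) :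
    HasDerivTwiceBoundedOn (kernelCombination κ m a) (kernelCombination κ01 m a)
      (kernelCombination κ02 m a) I01 (CK * √m) := by
  have h0 : (0 : ℝ) ∈ I01 := ⟨le_rfl, zero_le_one⟩
  have hCK : 0 ≤ CK :=
    (abs_nonneg _).trans ((hker.hasDerivTwiceBoundedOn_section h0).abs_le 0 h0)
  refine (HasDerivTwiceBoundedOn.sum_mul _ a fun l hl =>
    hker.hasDerivTwiceBoundedOn_section (gridPt_mem_I01 hl)).mono_bound ?_
  gcongr
  simpa using (Finset.Icc 1 m).sum_abs_le_sqrt_card a ha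

lemma kernelCombination_gridPt {σ : ℝ} {z : ℕ → ℝ}
    (hsvd : ∀ k ∈ Finset.Icc 1 m,
      ∑ l ∈ Finset.Icc 1 m, κ (gridPt m l) (gridPt m k) / m * a l = σ * z k)
    {k : ℕ} (hk : k ∈ Finset.Icc 1 m) :
    kernelCombination κ m a (gridPt m k) = m * (σ * z k) := by
  have hm : (m : ℝ) ≠ 0 := Nat.cast_ne_zero.2 (by have := Finset.mem_Icc.1 hk; omega)
  rw [← hsvd k hk, Finset.mul_sum]
  exact Finset.sum_congr rfl fun l _ => by field_simp

end KernelCombination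

theorem stmt_12_general (κ κ10 κ01 κ20 κ11 κ02 : ℝ → ℝ → ℝ) (CK : ℝ)
    (hker : IsC2KernelWith κ κ10 κ01 κ20 κ11 κ02 CK)
    (m : ℕ)
    (w z : ℕ → ℕ → ℝ) (σt : ℕ → ℝ)
    (hwunit : ∀ j ∈ Finset.Icc 1 m, (∑ l ∈ Finset.Icc 1 m, w j l ^ 2) = 1)
    (hzorth : ∀ j ∈ Finset.Icc 1 m, ∀ j' ∈ Finset.Icc 1 m,
      (∑ l ∈ Finset.Icc 1 m, z j l * z j' l) = if j = j' then (1:ℝ) else 0)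
    (hsvd : ∀ j ∈ Finset.Icc 1 m, ∀ i ∈ Finset.Icc 1 m,
      (∑ l ∈ Finset.Icc 1 m, (κ (gridPt m l) (gridPt m i) / m) * w j l) = σt j * z j i)
    (i j : ℕ) (hi : i ∈ Finset.Icc 1 m) (hj : j ∈ Finset.Icc 1 m)
    (hσi : 0 < σt i) (hσj : 0 < σt j) :
    |(∫ x in (0:ℝ)..1,
        ((1 / (σt j * Real.sqrt m)) * ∑ l ∈ Finset.Icc 1 m, w j l * κ (gridPt m l) x) *
        ((1 / (σt i * Real.sqrt m)) * ∑ l ∈ Finset.Icc 1 m, w i l * κ (gridPt m l) x))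
      - (if i = j then (1:ℝ) else 0)|
      ≤ CK ^ 2 / (6 * σt j * σt i * (m : ℝ) ^ 2) := by
  set S := Finset.Icc 1 m
  have hm : 0 < m := by have := Finset.mem_Icc.1 hi; omega
  have hm' : (0 : ℝ) < m := Nat.cast_pos.2 hm
  have hc : 0 < (σt j * σt i * m)⁻¹ := by positivity
  have huu := (hker.hasDerivTwiceBoundedOn_kernelCombination (hwunit j hj)).mul
    (hker.hasDerivTwiceBoundedOn_kernelCombination (hwunit i hi))
  have hquad := abs_integral_sub_midpoint_sum_le huu.hasDerivWithinAt
    huu.hasDerivWithinAt_deriv huu.abs_deriv2_le hm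
  have hintegrand (x : ℝ) : ((1 / (σt j * √m)) * ∑ l ∈ S, w j l * κ (gridPt m l) x) *
      ((1 / (σt i * √m)) * ∑ l ∈ S, w i l * κ (gridPt m l) x) =
      (σt j * σt i * m)⁻¹ *
        (kernelCombination κ m (w j) x * kernelCombination κ m (w i) x) := by
    simp only [kernelCombination]; field_simp; rw [Real.sq_sqrt hm'.le]; ring
  have hnodes : (σt j * σt i * m)⁻¹ *
      ((∑ k ∈ S, kernelCombination κ m (w j) (gridPt m k) *
        kernelCombination κ m (w i) (gridPt m k)) / m) = if i = j then 1 else 0 := by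
    rw [hzorth j hj i hi |>.trans (if_congr eq_comm rfl rfl) |>.symm,
      Finset.sum_congr rfl fun k hk => by rw [kernelCombination_gridPt (hsvd j hj) hk,
        kernelCombination_gridPt (hsvd i hi) hk], Finset.sum_div, Finset.mul_sum]
    exact Finset.sum_congr rfl fun k _ => by field_simp
  rw [intervalIntegral.integral_congr fun x _ => hintegrand x,
    intervalIntegral.integral_const_mul, ← hnodes, ← mul_sub, abs_mul, abs_of_pos hc]
  calc _ ≤ (σt j * σt i * m)⁻¹ * (4 * (CK * √m * (CK * √m)) / (24 * m ^ 2)) := by gcongr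
    _ = CK ^ 2 / (6 * σt j * σt i * m ^ 2) := by
        rw [mul_mul_mul_comm, Real.mul_self_sqrt hm'.le]; field_simp; ring

/-- Let `(w̃_{j,m}, z̃_{j,m}, σ̃_{j,m})` be singular pairs of
`A_m = (κ(ξ_{i,m},ξ_{j,m})/m)_{ij}`, and for `σ̃_{j,m} > 0` set
`ṽ_{j,m} = (1/(σ̃_{j,m}√m)) Σ_l (w̃_{j,m})_l κ(ξ_{l,m},·)`.  Then for `i,j ∈ {1,…,m}` with
`σ̃_{i,m}, σ̃_{j,m} > 0`:
`|⟨ṽ_{j,m}, ṽ_{i,m}⟩_{L²(0,1)} − δ_{ij}| ≤ C_K²/(6 σ̃_{j,m} σ̃_{i,m} m²)`. -/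
theorem stmt_12 (κ κ10 κ01 κ20 κ11 κ02 : ℝ → ℝ → ℝ) (CK : ℝ)
    (hker : IsC2KernelWith κ κ10 κ01 κ20 κ11 κ02 CK)
    (m : ℕ) (hm : 1 ≤ m)
    (w z : ℕ → ℕ → ℝ) (σt : ℕ → ℝ)
    (hwunit : ∀ j ∈ Finset.Icc 1 m, (∑ l ∈ Finset.Icc 1 m, w j l ^ 2) = 1)
    (hzorth : ∀ j ∈ Finset.Icc 1 m, ∀ j' ∈ Finset.Icc 1 m,
      (∑ l ∈ Finset.Icc 1 m, z j l * z j' l) = if j = j' then (1:ℝ) else 0)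
    (hσt : ∀ j ∈ Finset.Icc 1 m, 0 ≤ σt j)
    (hsvd : ∀ j ∈ Finset.Icc 1 m, ∀ i ∈ Finset.Icc 1 m,
      (∑ l ∈ Finset.Icc 1 m, (κ (gridPt m l) (gridPt m i) / m) * w j l) = σt j * z j i)
    (i j : ℕ) (hi : i ∈ Finset.Icc 1 m) (hj : j ∈ Finset.Icc 1 m)
    (hσi : 0 < σt i) (hσj : 0 < σt j) :
    |(∫ x in (0:ℝ)..1,
        ((1 / (σt j * Real.sqrt m)) * ∑ l ∈ Finset.Icc 1 m, w j l * κ (gridPt m l) x) *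
        ((1 / (σt i * Real.sqrt m)) * ∑ l ∈ Finset.Icc 1 m, w i l * κ (gridPt m l) x))
      - (if i = j then (1:ℝ) else 0)|
      ≤ CK ^ 2 / (6 * σt j * σt i * (m : ℝ) ^ 2) :=
  stmt_12_general κ κ10 κ01 κ20 κ11 κ02 CK hker m w z σt hwunit hzorth hsvd i j hi hj hσi hσj
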